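/- If a finite family F ⊆ binom(ℕ,d) is shifted, then Inc(F) is also shifted. -/

import Mathlib

def Inc1 : Set (ℕ → ℕ) := {π | StrictMono π ∧ ∀ j, π j ≤ j + 1}

def incF (F : Set (Finset ℕ)) : Set (Finset ℕ) :=
  {v | ∃ u ∈ F, ∃ π ∈ Inc1, v = u.image π}

def compressionIn (A : Set ℕ) (d n : ℕ) : Set (Finset ℕ) :=
  {v | ↑v ⊆ A ∧ v.card = d ∧
    {w : Finset ℕ | ↑w ⊆ A ∧ w.card = d ∧ toColex w ≤ toColex v}.ncard ≤ n}

def IsCompressedIn (A : Set ℕ) (d : ℕ) (F : Set (Finset ℕ)) : Prop :=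
  (∀ u ∈ F, ↑u ⊆ A ∧ u.card = d) ∧
  ∀ u ∈ F, ∀ v : Finset ℕ, ↑v ⊆ A → v.card = d → toColex v ≤ toColex u → v ∈ F

def hatL (F : Set (Finset ℕ)) (k : ℕ) : Set (Finset ℕ) :=
  {u | (∀ x ∈ u, k < x) ∧ insert k u ∈ F}

def hatR (F : Set (Finset ℕ)) (k : ℕ) : Set (Finset ℕ) :=
  {u | (∀ x ∈ u, x < k) ∧ insert k u ∈ F}

def leftComp (d : ℕ) (F : Set (Finset ℕ)) : Set (Finset ℕ) :=
  ⋃ k : ℕ, {v | ∃ w ∈ compressionIn {j | k < j} (d - 1) (hatL F k).ncard, v = insert k w}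

def rightComp (d : ℕ) (F : Set (Finset ℕ)) : Set (Finset ℕ) :=
  ⋃ k : ℕ, {v | ∃ w ∈ compressionIn Set.univ (d - 1) (hatR F k).ncard, v = insert k w}

def BorelLE (u v : Finset ℕ) : Prop :=
  List.Forall₂ (· ≤ ·) (u.sort (· ≤ ·)) (v.sort (· ≤ ·))

def IsShifted (F : Set (Finset ℕ)) : Prop :=
  ∀ u ∈ F, ∀ v, BorelLE v u → v ∈ F

def piShift (i : ℕ) : ℕ → ℕ := fun j => if j < i then j else j + 1

def IsBinRep (d m s : ℕ) (a : ℕ → ℕ) : Prop :=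
  1 ≤ s ∧ s ≤ d ∧ (∀ i, s ≤ i → i < d → a i < a (i + 1)) ∧ s ≤ a s ∧
    m = ∑ i ∈ Finset.Icc s d, Nat.choose (a i) i

def famLE (F G : Set (Finset ℕ)) : Prop :=
  F = G ∨ ∃ m ∈ G, m ∉ F ∧
    ∀ w : Finset ℕ, (w ∈ F ∧ w ∉ G) ∨ (w ∈ G ∧ w ∉ F) → toColex w ≤ toColex m

def IsSimplicialComplex (Δ : Set (Finset ℕ)) : Prop :=
  Δ.Finite ∧ ∀ F ∈ Δ, ∀ G ⊆ F, G ∈ Δ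

/-! If `w ≤_B π(u)` with `π ∈ Inc₁`, then `wᵢ ≤ uᵢ + 1` for every `i`. Let `t := u_m` for the first
index `m` with `w_m = u_m + 1` (or any `t` above `w` if there is none). Then `t ∉ w`, and lowering
every entry of `w` above `t` by one gives a set `u' ≤_B u`, hence `u' ∈ F`, with `w = piShift t (u')`,
and `piShift t ∈ Inc₁` is the map that skips `t`. -/

def unshift (t x : ℕ) : ℕ := if x ≤ t then x else x - 1

lemma piShift_mem_Inc1 (t : ℕ) : piShift t ∈ Inc1 :=
  ⟨fun j k hjk => by unfold piShift; split_ifs <;> omega,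
   fun j => by unfold piShift; split_ifs <;> omega⟩

lemma piShift_unshift {t x : ℕ} (hx : x ≠ t) : piShift t (unshift t x) = x := by
  unfold piShift unshift; split_ifs <;> omega

lemma unshift_strictMonoOn (t : ℕ) : StrictMonoOn (unshift t) {x | x ≠ t} := by
  intro x (hx : x ≠ t) y (hy : y ≠ t) hxy
  unfold unshift; split_ifs <;> omega

lemma unshift_le_of_le_succ {t x y : ℕ} (hyx : y ≤ x + 1) (htx : t < x) : unshift t y ≤ x := by
  unfold unshift; split_ifs <;> omega

lemma StrictMonoOn.finsetSort_image {f : ℕ → ℕ} {s : Finset ℕ} (hf : StrictMonoOn f s) :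
    (s.image f).sort (· ≤ ·) = (s.sort (· ≤ ·)).map f := by
  have hlt : ((s.sort (· ≤ ·)).map f).Pairwise (· < ·) :=
    List.pairwise_map.2 <| (Finset.sortedLT_sort s).pairwise.imp_of_mem fun ha hb hab =>
      hf ((Finset.mem_sort _).1 ha) ((Finset.mem_sort _).1 hb) hab
  have hsort := (List.toFinset_sort (· ≤ ·) hlt.nodup).2 (hlt.imp le_of_lt)
  have himage : ((s.sort (· ≤ ·)).map f).toFinset = s.image f := by ext; simp
  rwa [himage] at hsort

-- The bound `c ≤ t` lets the induction keep `t` above the entries it has already passed.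
lemma exists_notMem_forall₂_unshift_le :
    ∀ (W L : List ℕ) (c : ℕ), W.Pairwise (· < ·) → L.Pairwise (· < ·) →
      List.Forall₂ (fun y x => y ≤ x + 1) W L → (∀ x ∈ L, c ≤ x) →
      ∃ t, c ≤ t ∧ t ∉ W ∧ List.Forall₂ (fun y x => unshift t y ≤ x) W L
  | [], _, c, _, _, hWL, _ => ⟨c, le_rfl, List.not_mem_nil, by cases hWL; exact .nil⟩
  | b :: B, a :: A, c, hW, hL, .cons hba hBA, hc => by
    rw [List.pairwise_cons] at hW hL
    by_cases hbump : a < b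
    · refine ⟨a, hc a List.mem_cons_self, ?_, .cons ?_ ?_⟩
      · rintro (_ | ⟨_, hB⟩) <;> [omega; exact absurd (hW.1 a hB) (by omega)]
      · unfold unshift; split_ifs <;> omega
      · exact ((List.forall₂_and_left _ _).2 ⟨hL.1, hBA.flip⟩).flip.imp
          fun y x h => unshift_le_of_le_succ h.2 h.1
    · obtain ⟨t, hat, htB, hBA'⟩ := exists_notMem_forall₂_unshift_le B A (a + 1) hW.2 hL.2 hBA hL.1
      refine ⟨t, (hc a List.mem_cons_self).trans (by omega), ?_, .cons ?_ hBA'⟩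
      · rintro (_ | ⟨_, hB⟩) <;> [omega; exact htB hB]
      · unfold unshift; split_ifs <;> omega

theorem stmt4_general (F : Set (Finset ℕ)) (hsh : IsShifted F) : IsShifted (incF F) := by
  rintro _ ⟨u, hu, π, ⟨hπ, hπ_le⟩, rfl⟩ w hw
  rw [BorelLE, (hπ.strictMonoOn _).finsetSort_image, List.forall₂_map_right_iff] at hw
  obtain ⟨t, -, htw, hle⟩ := exists_notMem_forall₂_unshift_le _ _ 0
    (Finset.sortedLT_sort w).pairwise (Finset.sortedLT_sort u).pairwise
    (hw.imp fun y x h => h.trans (hπ_le x)) fun _ _ => Nat.zero_le _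
  rw [Finset.mem_sort] at htw
  have hw_ne : ∀ x ∈ w, x ≠ t := fun x hx => ne_of_mem_of_not_mem hx htw
  refine ⟨w.image (unshift t), hsh u hu _ ?_, piShift t, piShift_mem_Inc1 t, ?_⟩
  · rw [BorelLE, ((unshift_strictMonoOn t).mono hw_ne).finsetSort_image,
      List.forall₂_map_left_iff]
    exact hle
  · rw [Finset.image_image, eq_comm]
    exact (Finset.image_congr fun x hx => piShift_unshift (hw_ne x hx)).trans w.image_id

theorem stmt4 (d : ℕ) (hd : 1 ≤ d) (F : Set (Finset ℕ)) (hFfin : F.Finite)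
    (hFd : ∀ u ∈ F, u.card = d) (hsh : IsShifted F) : IsShifted (incF F) :=
  stmt4_general F hsh
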